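/- arXiv:1605.02045 — 2 statements merged into one kernel-verified Lean document; each statement's English description precedes it below -/
import Mathlib

section
/- A semi-labeled tree is determined by its set of clusters: if two semi-labeled trees on the same label set have equal cluster sets, then they are isomorphic (there is a graph isomorphism of the underlying trees commuting with the labeling functions). -/
open Function Set

/-- A finite rooted tree on a vertex type `V`, presented by its parent function:
the root is a fixed point of `parent`, and every vertex reaches the root by
iterating `parent`. -/
structure ParentTree (V : Type*) where
  root : V
  parent : V → V
  parent_root : parent root = root
  reaches_root : ∀ v : V, ∃ n : ℕ, parent^[n] v = root

namespace ParentTree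

variable {V : Type*}

/-- `u ≤_T v`: `u` lies on the path from `v` to the root `r(T)`. -/
def anc (t : ParentTree V) (u v : V) : Prop := ∃ n : ℕ, t.parent^[n] v = u

/-- The set of children of a vertex. -/
def children (t : ParentTree V) (v : V) : Set V := {u | u ≠ v ∧ t.parent u = v}

/-- Undirected adjacency in the underlying tree. -/
def adj (t : ParentTree V) (u v : V) : Prop :=
  u ≠ v ∧ (t.parent u = v ∨ t.parent v = u)

/-- The degree of a vertex in the underlying undirected tree: the number of its
neighbors (its children, plus its parent when it is not the root). -/
noncomputable def degree (t : ParentTree V) (v : V) : ℕ :=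
  {u : V | t.adj u v}.ncard

end ParentTree

/-- A semi-labeled tree `(T, φ)`: a rooted tree together with a label set
`labels ⊆ L` and a labeling map `lab` (the map `φ`), such that every node with
at most one child (equivalently, in the rooted setting, every node of small
degree that would be suppressible) carries at least one label.  This is the
rooted form of the requirement that every node of degree at most two is in the
image of `φ`. -/
structure SemiLabeledTree (L V : Type*) extends ParentTree V where
  labels : Set L
  lab : L → V
  labeled_of_few_children :
    ∀ v : V, (ParentTree.children toParentTree v).ncard ≤ 1 → ∃ ℓ ∈ labels, lab ℓ = v

namespace SemiLabeledTree

variable {L V : Type*}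

/-- The set `φ⁻¹(v)` of labels of a node `v`. -/
def labelsOf (T : SemiLabeledTree L V) (v : V) : Set L := {ℓ ∈ T.labels | T.lab ℓ = v}

/-- Every node is labeled. -/
def FullyLabeled (T : SemiLabeledTree L V) : Prop := ∀ v : V, ∃ ℓ ∈ T.labels, T.lab ℓ = v

/-- Every node has at most one label. -/
def SingularlyLabeled (T : SemiLabeledTree L V) : Prop :=
  ∀ ℓ ∈ T.labels, ∀ ℓ' ∈ T.labels, T.lab ℓ = T.lab ℓ' → ℓ = ℓ'

/-- `ℓ ≤_T ℓ'`: the node of `ℓ` is an ancestor of the node of `ℓ'`. -/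
def labelLe (T : SemiLabeledTree L V) (ℓ ℓ' : L) : Prop :=
  T.toParentTree.anc (T.lab ℓ) (T.lab ℓ')

/-- `ℓ <_T ℓ'`: the node of `ℓ` is a proper ancestor of the node of `ℓ'`. -/
def labelLt (T : SemiLabeledTree L V) (ℓ ℓ' : L) : Prop :=
  T.labelLe ℓ ℓ' ∧ T.lab ℓ ≠ T.lab ℓ'

/-- `ℓ ∥_T ℓ'`: the nodes of `ℓ` and `ℓ'` are incomparable. -/
def labelPar (T : SemiLabeledTree L V) (ℓ ℓ' : L) : Prop :=
  ¬ T.labelLe ℓ ℓ' ∧ ¬ T.labelLe ℓ' ℓ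

/-- The cluster `X(u)`: all labels carried by descendants of `u`. -/
def cluster (T : SemiLabeledTree L V) (u : V) : Set L :=
  {ℓ ∈ T.labels | T.toParentTree.anc u (T.lab ℓ)}

/-- The set of clusters `Cl(T)`. -/
def Cl (T : SemiLabeledTree L V) : Set (Set L) := {X | ∃ u : V, X = T.cluster u}

/-- `D(T)`: ordered pairs of labels in strict ancestor relation. -/
def Dset (T : SemiLabeledTree L V) : Set (L × L) :=
  {p | p.1 ∈ T.labels ∧ p.2 ∈ T.labels ∧ T.labelLt p.1 p.2}

/-- `N(T)`: unordered pairs of incomparable labels. -/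
def Nset (T : SemiLabeledTree L V) : Set (Sym2 L) :=
  {z | ∃ ℓ ℓ' : L, z = Sym2.mk ℓ ℓ' ∧ ℓ ∈ T.labels ∧ ℓ' ∈ T.labels ∧ T.labelPar ℓ ℓ'}

end SemiLabeledTree

/-- The cluster set of the restriction `T|A`:
`{ X ∩ A : X ∈ C, X ∩ A ≠ ∅ }`. -/
def restrictCl {L : Type*} (C : Set (Set L)) (A : Set L) : Set (Set L) :=
  {Y | ∃ X ∈ C, Y = X ∩ A ∧ Y.Nonempty}

/-- `T` ancestrally displays `T'`: `Cl(T') ⊆ Cl(T | L(T'))`. -/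
def Displays {L V W : Type*} (T : SemiLabeledTree L V) (T' : SemiLabeledTree L W) : Prop :=
  T'.Cl ⊆ restrictCl T.Cl T'.labels

section Profile

variable {L V : Type*} {k : ℕ}

/-- The label set `L(P)` of a profile. -/
def LP (P : Fin k → SemiLabeledTree L V) : Set L := ⋃ i, (P i).labels

/-- `P` is ancestrally compatible: some semi-labeled tree on the label set
`L(P)` ancestrally displays every tree of the profile. -/
def AncCompat (P : Fin k → SemiLabeledTree L V) : Prop :=
  ∃ (W : Type) (_ : Fintype W) (T : SemiLabeledTree L W),
    T.labels = LP P ∧ ∀ i, Displays T (P i)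

/-- The restricted profile `P|X` is ancestrally compatible: some semi-labeled
tree on label set `L(P) ∩ X` ancestrally displays each restriction
`Tᵢ|(X ∩ L(Tᵢ))` (displaying is expressed via cluster sets, since the
restriction is determined by its cluster set). -/
def AncCompatOn (P : Fin k → SemiLabeledTree L V) (X : Set L) : Prop :=
  ∃ (W : Type) (_ : Fintype W) (T : SemiLabeledTree L W),
    T.labels = LP P ∩ X ∧
    ∀ i, restrictCl (P i).Cl (X ∩ (P i).labels) ⊆ restrictCl T.Cl (X ∩ (P i).labels)

/-- `Desc_i(U)`: labels of `Tᵢ` descending from some member of `U(i)`. -/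
def Desci (P : Fin k → SemiLabeledTree L V) (U : Fin k → Set L) (i : Fin k) : Set L :=
  {ℓ ∈ (P i).labels | ∃ ℓ' ∈ U i, (P i).labelLe ℓ' ℓ}

/-- `Desc_P(U) = ⋃ i, Desc_i(U)`. -/
def DescP (P : Fin k → SemiLabeledTree L V) (U : Fin k → Set L) : Set L :=
  ⋃ i, Desci P U i

/-- A valid position: each `U(i) ⊆ L(Tᵢ)`; (V1) if `|U(i)| ≥ 2` then the
elements of `U(i)` are siblings in `Tᵢ` (children of a common node `p`);
(V2) `Desc_i(U) = Desc_P(U) ∩ L(Tᵢ)`. -/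
def ValidPos (P : Fin k → SemiLabeledTree L V) (U : Fin k → Set L) : Prop :=
  (∀ i, U i ⊆ (P i).labels) ∧
  (∀ i, (∃ a ∈ U i, ∃ b ∈ U i, a ≠ b) →
    ∃ p : V, ∀ a ∈ U i, (P i).lab a ≠ p ∧ (P i).parent ((P i).lab a) = p) ∧
  (∀ i, Desci P U i = DescP P U ∩ (P i).labels)

/-- `ℓ` is semi-universal in `U`: `ℓ` occurs in `U`, and `U(i) = {ℓ}` for every
`i` with `ℓ ∈ L(Tᵢ)`. -/
def SemiUniversal (P : Fin k → SemiLabeledTree L V) (U : Fin k → Set L) (ℓ : L) : Prop :=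
  (∃ i, ℓ ∈ U i) ∧ ∀ i, ℓ ∈ (P i).labels → U i = {ℓ}

/-- `Ch_i(ℓ)`: the labels of the children of (the node of) `ℓ` in `Tᵢ`. -/
def ChL (P : Fin k → SemiLabeledTree L V) (i : Fin k) (ℓ : L) : Set L :=
  {m ∈ (P i).labels |
    (P i).lab m ≠ (P i).lab ℓ ∧ (P i).parent ((P i).lab m) = (P i).lab ℓ}

/-- The successor of `U` with respect to `S`: if `U(i) = {ℓ}` for some `ℓ ∈ S`
then `U'(i) = Ch_i(ℓ)`, otherwise `U'(i) = U(i)`. -/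
def Succ (P : Fin k → SemiLabeledTree L V) (U : Fin k → Set L) (S : Set L) :
    Fin k → Set L := fun i =>
  {m | (∃ ℓ ∈ S, U i = {ℓ} ∧ m ∈ ChL P i ℓ) ∨ ((¬ ∃ ℓ ∈ S, U i = {ℓ}) ∧ m ∈ U i)}

/-- Adjacency in the display graph `H_P`: labels `ℓ, m` are adjacent when in
some input tree the node of one is the parent of the node of the other. -/
def dgAdj (P : Fin k → SemiLabeledTree L V) (ℓ m : L) : Prop :=
  ∃ i, ℓ ∈ (P i).labels ∧ m ∈ (P i).labels ∧
    (((P i).parent ((P i).lab m) = (P i).lab ℓ ∧ (P i).lab m ≠ (P i).lab ℓ) ∨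
     ((P i).parent ((P i).lab ℓ) = (P i).lab m ∧ (P i).lab ℓ ≠ (P i).lab m))

/-- Adjacency in the subgraph of `H_P` induced by `X`. -/
def dgAdjOn (P : Fin k → SemiLabeledTree L V) (X : Set L) (ℓ m : L) : Prop :=
  ℓ ∈ X ∧ m ∈ X ∧ dgAdj P ℓ m

/-- Reachability (connectivity) in the subgraph of `H_P` induced by `X`. -/
def dgReach (P : Fin k → SemiLabeledTree L V) (X : Set L) : L → L → Prop :=
  Relation.ReflTransGen (dgAdjOn P X)

/-- `W 0, …, W (p-1)` are (the label sets of) the connected components of the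
subgraph of the display graph `H_P` induced by `X`: they are nonempty subsets
of `X` partitioning `X`, and two labels lie in a common `W j` iff they are
connected in the induced subgraph. -/
def IsComponents (P : Fin k → SemiLabeledTree L V) (X : Set L) {p : ℕ}
    (W : Fin p → Set L) : Prop :=
  (∀ j, (W j).Nonempty) ∧ (∀ j, W j ⊆ X) ∧
  (∀ ℓ ∈ X, ∃! j, ℓ ∈ W j) ∧
  (∀ ℓ m : L, (∃ j, ℓ ∈ W j ∧ m ∈ W j) ↔ (ℓ ∈ X ∧ m ∈ X ∧ dgReach P X ℓ m))

end Profile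

/-!
Leaves carry labels, so every cluster is nonempty, and a strict ancestor `u` of `v` always has
a label in `X(u) \ X(v)`: at `u` itself when `u` has at most one child, and otherwise below a
second child of `u`, beside the child leading to `v`. Hence `X(w) ⊆ X(u)` exactly when `u` is an
ancestor of `w`, and equal cluster sets yield a bijection `ψ` preserving the ancestor order.
Edges are the covering pairs of that order, and the node of `ℓ` is the one whose cluster is the
least containing `ℓ`, so `ψ` preserves both.
-/

namespace ParentTree

variable {V : Type*} (t : ParentTree V)

theorem anc_refl (u : V) : t.anc u u := ⟨0, rfl⟩

theorem anc_trans {u v w : V} (h : t.anc u v) (h' : t.anc v w) : t.anc u w := by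
  obtain ⟨n, rfl⟩ := h
  obtain ⟨m, rfl⟩ := h'
  exact ⟨n + m, iterate_add_apply _ _ _ _⟩

theorem anc_of_parent_eq {u c : V} (h : t.parent c = u) : t.anc u c := ⟨1, h⟩

theorem anc_parent (v : V) : t.anc (t.parent v) v := t.anc_of_parent_eq rfl

theorem eq_root_of_isPeriodicPt {p : ℕ} {u : V} (hp : 0 < p)
    (hu : IsPeriodicPt t.parent p u) : u = t.root := by
  obtain ⟨N, hN⟩ := t.reaches_root u
  have hNp : p * N - N + N = p * N := Nat.sub_add_cancel (Nat.le_mul_of_pos_left N hp)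
  rw [← (hu.mul_const N).eq, ← hNp, iterate_add_apply, hN,
    iterate_fixed t.parent_root]

theorem anc_antisymm {u v : V} (h : t.anc u v) (h' : t.anc v u) : u = v := by
  obtain ⟨n, hn⟩ := h
  obtain ⟨m, hm⟩ := h'
  rcases Nat.eq_zero_or_pos (n + m) with h0 | hpos
  · rw [← hn, show n = 0 by omega, iterate_zero_apply]
  · have hper : IsPeriodicPt t.parent (m + n) v := by
      rw [IsPeriodicPt, IsFixedPt, iterate_add_apply, hn, hm]
    have hv := t.eq_root_of_isPeriodicPt (by omega) hper
    rw [← hn, hv, iterate_fixed t.parent_root]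

theorem anc_eq_of_forall_anc_iff {a b : V} (h : ∀ w, t.anc w a ↔ t.anc w b) : a = b :=
  t.anc_antisymm ((h a).1 (t.anc_refl a)) ((h b).2 (t.anc_refl b))

theorem anc_total_of_anc {u v w : V} (h : t.anc u w) (h' : t.anc v w) :
    t.anc u v ∨ t.anc v u := by
  obtain ⟨n, rfl⟩ := h
  obtain ⟨m, rfl⟩ := h'
  rcases le_total n m with hle | hle
  · exact Or.inr ⟨m - n, by rw [← iterate_add_apply, Nat.sub_add_cancel hle]⟩
  · exact Or.inl ⟨n - m, by rw [← iterate_add_apply, Nat.sub_add_cancel hle]⟩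

theorem anc_parent_of_anc_of_ne {u v : V} (h : t.anc u v) (hne : u ≠ v) :
    t.anc u (t.parent v) := by
  obtain ⟨_ | n, hn⟩ := h
  · exact absurd hn.symm hne
  · exact ⟨n, hn⟩

theorem exists_mem_children_anc {u v : V} (h : t.anc u v) (hne : u ≠ v) :
    ∃ c ∈ t.children u, t.anc c v := by
  obtain ⟨n, hn⟩ := h
  induction n generalizing v with
  | zero => exact absurd hn.symm hne
  | succ n ih =>
    rw [iterate_succ_apply] at hn
    by_cases hp : t.parent v = u
    · exact ⟨v, ⟨hne.symm, hp⟩, t.anc_refl v⟩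
    · obtain ⟨c, hc, hcv⟩ := ih (Ne.symm hp) hn
      exact ⟨c, hc, t.anc_trans hcv (t.anc_parent v)⟩

theorem eq_of_anc_of_mem_children {u c c' : V} (hc : c ∈ t.children u)
    (hc' : c' ∈ t.children u) (h : t.anc c c') : c = c' := by
  by_contra hne
  have hcu : t.anc c u := hc'.2 ▸ t.anc_parent_of_anc_of_ne h hne
  exact hc.1 (t.anc_antisymm hcu (t.anc_of_parent_eq hc.2))

theorem exists_anc_children_eq_empty [Finite V] (u : V) :
    ∃ w, t.anc u w ∧ t.children w = ∅ := by
  let below : V → V → Prop := fun c w => t.anc w c ∧ w ≠ c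
  have : IsTrans V below := ⟨fun a b c hab hbc =>
    ⟨t.anc_trans hbc.1 hab.1, fun hca => hbc.2 (t.anc_antisymm hbc.1 (hca ▸ hab.1))⟩⟩
  have : Std.Irrefl below := ⟨fun a h => h.2 rfl⟩
  obtain ⟨w, huw, hmin⟩ := (Finite.wellFounded_of_trans_of_irrefl below).has_min
    {w | t.anc u w} ⟨u, t.anc_refl u⟩
  refine ⟨w, huw, Set.eq_empty_of_forall_notMem fun c hc => ?_⟩
  have hwc : t.anc w c := t.anc_of_parent_eq hc.2
  exact hmin c (t.anc_trans huw hwc) ⟨hwc, hc.1.symm⟩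

theorem parent_eq_and_ne_iff (u v : V) :
    (t.parent v = u ∧ u ≠ v) ↔
      (t.anc u v ∧ u ≠ v ∧ ∀ w, t.anc w v → w ≠ v → t.anc w u) := by
  constructor
  · rintro ⟨rfl, hne⟩
    exact ⟨t.anc_parent v, hne, fun w hw hwv => t.anc_parent_of_anc_of_ne hw hwv⟩
  · rintro ⟨huv, hne, hmax⟩
    have hpv : t.parent v ≠ v := fun hfix => by
      obtain ⟨n, hn⟩ := huv
      exact hne (by rw [← hn, iterate_fixed hfix])
    exact ⟨t.anc_antisymm (hmax _ (t.anc_parent v) hpv) (t.anc_parent_of_anc_of_ne huv hne), hne⟩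

theorem adj_iff (u v : V) :
    t.adj u v ↔ (t.parent u = v ∧ v ≠ u) ∨ (t.parent v = u ∧ u ≠ v) := by
  unfold adj
  constructor
  · rintro ⟨hne, h | h⟩
    exacts [Or.inl ⟨h, hne.symm⟩, Or.inr ⟨h, hne⟩]
  · rintro (⟨h, hne⟩ | ⟨h, hne⟩)
    exacts [⟨hne.symm, Or.inl h⟩, ⟨hne, Or.inr h⟩]

variable {t} {V' : Type*} {t' : ParentTree V'}

theorem parent_eq_and_ne_iff_of_anc_iff {ψ : V ≃ V'}
    (hψ : ∀ a b, t.anc a b ↔ t'.anc (ψ a) (ψ b)) (u v : V) :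
    (t.parent v = u ∧ u ≠ v) ↔ (t'.parent (ψ v) = ψ u ∧ ψ u ≠ ψ v) := by
  rw [parent_eq_and_ne_iff, parent_eq_and_ne_iff, ← ψ.forall_congr_right]
  simp only [hψ, ψ.injective.ne_iff]

theorem adj_iff_adj_of_anc_iff {ψ : V ≃ V'}
    (hψ : ∀ a b, t.anc a b ↔ t'.anc (ψ a) (ψ b)) (u v : V) :
    t.adj u v ↔ t'.adj (ψ u) (ψ v) := by
  rw [adj_iff, adj_iff, parent_eq_and_ne_iff_of_anc_iff hψ, parent_eq_and_ne_iff_of_anc_iff hψ]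

end ParentTree

namespace SemiLabeledTree

variable {L V : Type*} (T : SemiLabeledTree L V)

theorem cluster_subset_labels (u : V) : T.cluster u ⊆ T.labels := fun _ hℓ => hℓ.1

theorem cluster_mono {u v : V} (h : T.anc u v) : T.cluster v ⊆ T.cluster u :=
  fun _ hℓ => ⟨hℓ.1, T.anc_trans h hℓ.2⟩

theorem cluster_nonempty [Finite V] (u : V) : (T.cluster u).Nonempty := by
  obtain ⟨w, huw, hleaf⟩ := T.exists_anc_children_eq_empty u
  obtain ⟨ℓ, hℓ, rfl⟩ := T.labeled_of_few_children w (by simp [hleaf])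
  exact ⟨ℓ, hℓ, huw⟩

theorem exists_mem_cluster_notMem_of_mem_children [Finite V] {u c : V}
    (hc : c ∈ T.children u) : ∃ ℓ ∈ T.cluster u, ℓ ∉ T.cluster c := by
  have huc : T.anc u c := T.anc_of_parent_eq hc.2
  by_cases hfew : (T.children u).ncard ≤ 1
  · obtain ⟨ℓ, hℓ, rfl⟩ := T.labeled_of_few_children u hfew
    exact ⟨ℓ, ⟨hℓ, T.anc_refl _⟩, fun hmem => hc.1 (T.anc_antisymm hmem.2 huc)⟩
  · obtain ⟨c', hc', hne⟩ := Set.exists_ne_of_one_lt_ncard (not_le.1 hfew) c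
    obtain ⟨ℓ, hℓ⟩ := T.cluster_nonempty c'
    refine ⟨ℓ, T.cluster_mono (T.anc_of_parent_eq hc'.2) hℓ, fun hmem => hne ?_⟩
    rcases T.anc_total_of_anc hℓ.2 hmem.2 with h | h
    exacts [T.eq_of_anc_of_mem_children hc' hc h, (T.eq_of_anc_of_mem_children hc hc' h).symm]

theorem cluster_subset_cluster_iff [Finite V] (u w : V) :
    T.cluster w ⊆ T.cluster u ↔ T.anc u w := by
  refine ⟨fun hsub => ?_, T.cluster_mono⟩
  by_cases heq : w = u
  · rw [heq]
    exact T.anc_refl u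
  obtain ⟨ℓ, hℓ⟩ := T.cluster_nonempty w
  refine (T.anc_total_of_anc (hsub hℓ).2 hℓ.2).resolve_right fun hwu => ?_
  obtain ⟨c, hc, hcu⟩ := T.exists_mem_children_anc hwu heq
  obtain ⟨ℓ', hℓ'w, hℓ'c⟩ := T.exists_mem_cluster_notMem_of_mem_children hc
  exact hℓ'c (T.cluster_mono hcu (hsub hℓ'w))

theorem cluster_injective [Finite V] : Injective T.cluster := fun u w h =>
  T.anc_antisymm ((T.cluster_subset_cluster_iff u w).1 h.ge)
    ((T.cluster_subset_cluster_iff w u).1 h.le)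

theorem range_cluster : Set.range T.cluster = T.Cl := by
  ext X
  exact exists_congr fun _ => eq_comm

variable {T} {V' : Type*} {T' : SemiLabeledTree L V'}

theorem exists_equiv_cluster_eq [Finite V] [Finite V'] (h : T.Cl = T'.Cl) :
    ∃ ψ : V ≃ V', ∀ u, T'.cluster (ψ u) = T.cluster u := by
  have hrange : Set.range T.cluster = Set.range T'.cluster := by
    rw [range_cluster, range_cluster, h]
  refine ⟨(Equiv.ofInjective _ T.cluster_injective).trans ((Equiv.setCongr hrange).trans
    (Equiv.ofInjective _ T'.cluster_injective).symm), fun u => ?_⟩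
  simp only [Equiv.trans_apply, Equiv.apply_ofInjective_symm, Equiv.setCongr_apply,
    Equiv.ofInjective_apply]

theorem anc_iff_anc_of_cluster_eq [Finite V] [Finite V'] {ψ : V ≃ V'}
    (hψ : ∀ u, T'.cluster (ψ u) = T.cluster u) (a b : V) :
    T.anc a b ↔ T'.anc (ψ a) (ψ b) := by
  rw [← cluster_subset_cluster_iff, ← cluster_subset_cluster_iff, hψ, hψ]

theorem lab_eq_of_cluster_eq [Finite V] [Finite V'] {ψ : V ≃ V'}
    (hψ : ∀ u, T'.cluster (ψ u) = T.cluster u) {ℓ : L} (hℓ : ℓ ∈ T.labels) :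
    T'.lab ℓ = ψ (T.lab ℓ) := by
  have hℓ' : ℓ ∈ T'.labels := by
    apply T'.cluster_subset_labels (ψ (T.lab ℓ))
    rw [hψ]
    exact ⟨hℓ, T.anc_refl _⟩
  refine T'.anc_eq_of_forall_anc_iff (ψ.forall_congr_right.1 fun w => ?_)
  calc T'.anc (ψ w) (T'.lab ℓ) ↔ ℓ ∈ T'.cluster (ψ w) := (and_iff_right hℓ').symm
    _ ↔ ℓ ∈ T.cluster w := by rw [hψ]
    _ ↔ T.anc w (T.lab ℓ) := and_iff_right hℓ
    _ ↔ T'.anc (ψ w) (ψ (T.lab ℓ)) := anc_iff_anc_of_cluster_eq hψ _ _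

end SemiLabeledTree

theorem stmt7_general {L V V' : Type*} [Fintype V] [Fintype V']
    (T : SemiLabeledTree L V) (T' : SemiLabeledTree L V')
    (hcl : T.Cl = T'.Cl) :
    ∃ ψ : V ≃ V',
      (∀ ℓ ∈ T.labels, T'.lab ℓ = ψ (T.lab ℓ)) ∧
      (∀ u v : V, T.toParentTree.adj u v ↔ T'.toParentTree.adj (ψ u) (ψ v)) := by
  obtain ⟨ψ, hψ⟩ := SemiLabeledTree.exists_equiv_cluster_eq hcl
  exact ⟨ψ, fun ℓ hℓ => SemiLabeledTree.lab_eq_of_cluster_eq hψ hℓ,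
    ParentTree.adj_iff_adj_of_anc_iff (SemiLabeledTree.anc_iff_anc_of_cluster_eq hψ)⟩

/-- A semi-labeled tree is determined by its cluster set: two
semi-labeled trees on the same label set with equal cluster sets are
isomorphic, via a bijection `ψ` of the vertex sets with `φ' = ψ ∘ φ` that
preserves edges in both directions. -/
theorem stmt7 {L V V' : Type*} [Fintype V] [Fintype V']
    (T : SemiLabeledTree L V) (T' : SemiLabeledTree L V')
    (hlab : T.labels = T'.labels) (hcl : T.Cl = T'.Cl) :
    ∃ ψ : V ≃ V',
      (∀ ℓ ∈ T.labels, T'.lab ℓ = ψ (T.lab ℓ)) ∧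
      (∀ u v : V, T.toParentTree.adj u v ↔ T'.toParentTree.adj (ψ u) (ψ v)) :=
  stmt7_general T T' hcl
end

section
/- If a semi-labeled tree T ancestrally displays a profile P = {T₁, …, T_k}, then for any subset X of the label set L(P), the restriction T|X ancestrally displays the restricted profile P|X = {T₁|(X ∩ L(T₁)), …, T_k|(X ∩ L(T_k))}. -/
open Function Set

theorem restrictCl_mono {L : Type*} {C D : Set (Set L)} (h : C ⊆ D) (A : Set L) :
    restrictCl C A ⊆ restrictCl D A := fun _ ⟨X, hX, hY, hne⟩ => ⟨X, h hX, hY, hne⟩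

theorem restrictCl_restrictCl {L : Type*} (C : Set (Set L)) (A B : Set L) :
    restrictCl (restrictCl C A) B = restrictCl C (A ∩ B) := by
  ext Y
  constructor
  · rintro ⟨_, ⟨X, hX, rfl, -⟩, rfl, hne⟩
    exact ⟨X, hX, inter_assoc X A B, hne⟩
  · rintro ⟨X, hX, rfl, hne⟩
    exact ⟨X ∩ A, ⟨X, hX, rfl, hne.mono (inter_subset_inter_right X inter_subset_left)⟩,
      (inter_assoc X A B).symm, hne⟩

theorem stmt10_general {L V W : Type*} {k : ℕ}
    (P : Fin k → SemiLabeledTree L V) (T : SemiLabeledTree L W)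
    (hdisp : ∀ i, Displays T (P i)) (X : Set L) :
    ∀ i, restrictCl (P i).Cl (X ∩ (P i).labels) ⊆
      restrictCl (restrictCl T.Cl X) (X ∩ (P i).labels) := by
  intro i
  calc restrictCl (P i).Cl (X ∩ (P i).labels)
      ⊆ restrictCl (restrictCl T.Cl (P i).labels) (X ∩ (P i).labels) :=
        restrictCl_mono (hdisp i) _
    _ = restrictCl T.Cl (X ∩ (P i).labels) := by
        rw [restrictCl_restrictCl, inter_eq_right.mpr inter_subset_right]
    _ = restrictCl (restrictCl T.Cl X) (X ∩ (P i).labels) := by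
        rw [restrictCl_restrictCl, ← inter_assoc, inter_self]

/-- If a semi-labeled tree `T` (on label set `L(P)`)
ancestrally displays a profile `P`, then for any `X ⊆ L(P)` the restriction
`T|X` ancestrally displays the restricted profile `P|X`; i.e., for each `i`,
`Cl(Tᵢ|(X ∩ L(Tᵢ))) ⊆ Cl((T|X) | (X ∩ L(Tᵢ)))` (restrictions are expressed by
their cluster sets). -/
theorem stmt10 {L V W : Type*} [Fintype V] [Fintype W] {k : ℕ}
    (P : Fin k → SemiLabeledTree L V) (T : SemiLabeledTree L W)
    (hlab : T.labels = LP P) (hdisp : ∀ i, Displays T (P i))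
    (X : Set L) (hX : X ⊆ LP P) :
    ∀ i, restrictCl (P i).Cl (X ∩ (P i).labels) ⊆
      restrictCl (restrictCl T.Cl X) (X ∩ (P i).labels) :=
  stmt10_general P T hdisp X
end
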